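/- arXiv:1902.01241 — 2 statements merged into one kernel-verified Lean document; each statement's English description precedes it below -/
import Mathlib

section
/- Let (P_n(x;t))_{n≥0} and (R_n(x;t))_{n≥0} be two sequences in Λ_n ⊗ ℤ[t] (homogeneous symmetric functions of degree n with polynomial coefficients in t) both satisfying: (i) the 0-th term equals 1; (ii) for n ≥ 1 the degree in t is less than (n+1)/2; and (iii) the functional equation t^{n+1} F_n(x; t^{-1}) = (t-1) Σ_{ℓ=0}^{n} h_ℓ[(t-2)X] h_{n-ℓ}(x) + Σ_{i+j+m=n} F_i(x;t) h_j[(t-1)X] h_m[(t-1)X] for all n ≥ 1. Then P_n = R_n for all n. -/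
/-!
Subtracting `F_n` from both sides of the functional equation leaves a right-hand side that
involves only `F_0, …, F_{n-1}`, because the `i = n` term of the triple sum is `F_n h_0[(t-1)X]² = F_n`.
So `t^{n+1} F_n(t⁻¹) - F_n` is determined recursively, and it determines `F_n`: the difference
`D` of two solutions satisfies `t^{n+1} D(t⁻¹) = D`, and when `2 deg D < n + 1` the leading
coefficient of `D` is mirrored into a degree above `deg D`, forcing `D = 0`.
-/

open Finset Polynomial

namespace Polynomial

theorem eq_zero_of_reflect_eq_self {R : Type*} [Semiring R] {N : ℕ} {p : R[X]}
    (hrefl : reflect N p = p) (hdeg : 2 * p.natDegree < N) : p = 0 := by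
  by_contra hp
  have hlead : p.coeff p.natDegree ≠ 0 := leadingCoeff_ne_zero.mpr hp
  have hmirror : p.coeff (N - p.natDegree) = p.coeff p.natDegree := by
    have h := coeff_reflect N p (N - p.natDegree)
    rwa [hrefl, revAt_le (Nat.sub_le _ _), Nat.sub_sub_self (by omega)] at h
  have hhigh : p.coeff (N - p.natDegree) = 0 := coeff_eq_zero_of_natDegree_lt (by omega)
  exact hlead (hmirror ▸ hhigh)

theorem eq_of_reflect_sub_self_eq {R : Type*} [Ring R] {N : ℕ} {p q : R[X]}
    (h : reflect N p - p = reflect N q - q) (hp : 2 * p.natDegree < N)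
    (hq : 2 * q.natDegree < N) : p = q := by
  rw [← sub_eq_zero]
  refine eq_zero_of_reflect_eq_self (N := N) ?_ ?_
  · rwa [reflect_sub, ← sub_eq_sub_iff_sub_eq_sub]
  · have := natDegree_sub_le p q
    omega

end Polynomial

theorem sum_range_succ_triple_eq_add {A : Type*} [Semiring A] (F g : ℕ → A) (hg0 : g 0 = 1)
    (n : ℕ) :
    ∑ i ∈ range (n + 1), ∑ j ∈ range (n + 1 - i), F i * g j * g (n - i - j) =
      (∑ i ∈ range n, ∑ j ∈ range (n + 1 - i), F i * g j * g (n - i - j)) + F n := by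
  simp [sum_range_succ, hg0]

/-- Here `S` plays the role of `Λ`, `h m = h_m(x)`, `w j = h_j[(t-2)X]`, `g j = h_j[(t-1)X]`,
and `reflect (n + 1) F` is `t^{n+1} F(t⁻¹)`. -/
theorem uniqueness_of_P {S : Type*} [CommRing S]
    (h : ℕ → S) (w g : ℕ → Polynomial S) (hg0 : g 0 = 1)
    (P R : ℕ → Polynomial S)
    (hP0 : P 0 = 1) (hR0 : R 0 = 1)
    (hPdeg : ∀ n, 1 ≤ n → 2 * (P n).natDegree < n + 1)
    (hRdeg : ∀ n, 1 ≤ n → 2 * (R n).natDegree < n + 1)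
    (hPeq : ∀ n, 1 ≤ n →
      reflect (n + 1) (P n) =
        (X - 1) * ∑ l ∈ range (n + 1), w l * C (h (n - l)) +
          ∑ i ∈ range (n + 1), ∑ j ∈ range (n + 1 - i), P i * g j * g (n - i - j))
    (hReq : ∀ n, 1 ≤ n →
      reflect (n + 1) (R n) =
        (X - 1) * ∑ l ∈ range (n + 1), w l * C (h (n - l)) +
          ∑ i ∈ range (n + 1), ∑ j ∈ range (n + 1 - i), R i * g j * g (n - i - j)) :
    P = R := by
  funext n
  induction n using Nat.strong_induction_on with
  | _ n ih =>
    rcases Nat.eq_zero_or_pos n with rfl | hn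
    · rw [hP0, hR0]
    · refine eq_of_reflect_sub_self_eq ?_ (hPdeg n hn) (hRdeg n hn)
      have hlower : ∑ i ∈ range n, ∑ j ∈ range (n + 1 - i), P i * g j * g (n - i - j) =
          ∑ i ∈ range n, ∑ j ∈ range (n + 1 - i), R i * g j * g (n - i - j) :=
        sum_congr rfl fun i hi => by rw [ih i (mem_range.mp hi)]
      rw [hPeq n hn, hReq n hn, sum_range_succ_triple_eq_add P g hg0,
        sum_range_succ_triple_eq_add R g hg0, hlower]
      abel
end

section
/- Suppose ψ(t,u) satisfies the functional equation (1/u + ψ(t^{-1}, tu)) H(u) - (1/u + h_1) = (1/(tu) + ψ(t,u)) H(tu) - (1/(tu) + h_1), and define ρ(t,u) = u H(u)(1 + t u ψ(t,u)). Then ρ satisfies ρ(t^{-1}, tu) = (t-1) u H(tu)/H(u) + (H(tu)^2/H(u)^2) ρ(t,u). -/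
/-!
Multiplying the functional equation of `ψ` by `tu` cancels `h₁` and clears the denominators,
leaving `t H(u) (1 + u ψ(t⁻¹,tu)) = (t - 1) + H(tu) (1 + t u ψ(t,u))`.  Multiplying this by
`u H(tu) / H(u)` gives the equation for `ρ`, since `u H(tu) H(u)⁻¹ · H(tu) (1 + t u ψ(t,u))`
is `(H(tu)² / H(u)²) ρ(t,u)`.
-/

theorem mul_one_add_eq_of_functional_equation {A : Type*} [CommRing A] (u t : Aˣ)
    (H1 H2 h1 psi1 psi2 : A)
    (hyp : ((↑u⁻¹ : A) + psi2) * H1 - ((↑u⁻¹ : A) + h1) =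
        ((↑(t * u)⁻¹ : A) + psi1) * H2 - ((↑(t * u)⁻¹ : A) + h1)) :
    ↑t * H1 * (1 + ↑u * psi2) = ↑t - 1 + H2 * (1 + ↑t * ↑u * psi1) := by
  have hu : (↑u⁻¹ : A) * ↑u = 1 := u.inv_mul
  have htu : (↑(t * u)⁻¹ : A) * (↑t * ↑u) = 1 := by
    rw [← Units.val_mul]; exact (t * u).inv_mul
  linear_combination (↑t * ↑u : A) * hyp + (↑t - ↑t * H1) * hu + (H2 - 1) * htu

theorem mul_eq_add_of_mul_eq_sub_add {A : Type*} [CommRing A] (H1 : Aˣ) (t u H2 a b : A)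
    (h : t * H1 * a = t - 1 + H2 * b) :
    t * u * H2 * a =
      (t - 1) * u * H2 * ↑H1⁻¹ + H2 ^ 2 * (↑H1⁻¹ : A) ^ 2 * (u * H1 * b) := by
  have hH : (↑H1⁻¹ : A) * H1 = 1 := H1.inv_mul
  calc t * u * H2 * a = u * H2 * ↑H1⁻¹ * (t * H1 * a) := by
        linear_combination (-t * u * H2 * a) * hH
    _ = u * H2 * ↑H1⁻¹ * (t - 1 + H2 * b) := by rw [h]
    _ = _ := by linear_combination (-u * H2 ^ 2 * (↑H1⁻¹ : A) * b) * hH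

/-- **Lemma on `ρ`.**  Work in the ring of formal power series in `u` over symmetric functions
localized at `t` (abstracted as a commutative ring `A`), with `u`, `t` and `H₁ = H(u)` invertible,
and with `H₂ = H(tu)`, `h₁ = h_1`, `ψ₁ = ψ(t,u)`, `ψ₂ = ψ(t⁻¹,tu)`.  If
`(1/u + ψ(t⁻¹,tu)) H(u) - (1/u + h₁) = (1/(tu) + ψ(t,u)) H(tu) - (1/(tu) + h₁)`,
then `ρ(t,u) := u H(u)(1 + t u ψ(t,u))` satisfies
`ρ(t⁻¹,tu) = (t-1) u H(tu)/H(u) + (H(tu)²/H(u)²) ρ(t,u)`,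
where `ρ(t⁻¹,tu) = tu H(tu)(1 + u ψ(t⁻¹,tu))`. -/
theorem rho_functional_equation {A : Type*} [CommRing A] (u t H1 : Aˣ) (H2 h1 psi1 psi2 : A)
    (hyp : ((↑u⁻¹ : A) + psi2) * ↑H1 - ((↑u⁻¹ : A) + h1) =
        ((↑(t * u)⁻¹ : A) + psi1) * H2 - ((↑(t * u)⁻¹ : A) + h1)) :
    ↑t * ↑u * H2 * (1 + ↑u * psi2) =
      (↑t - 1) * ↑u * H2 * ↑H1⁻¹ +
        H2 ^ 2 * (↑H1⁻¹ : A) ^ 2 * (↑u * ↑H1 * (1 + ↑t * ↑u * psi1)) :=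
  mul_eq_add_of_mul_eq_sub_add H1 _ _ _ _ _
    (mul_one_add_eq_of_functional_equation u t _ H2 h1 psi1 psi2 hyp)
end
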